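/- Let E be a complex Banach space and A a bounded operator on E. Every boundary point of the spectrum of A that is not an isolated point of the spectrum belongs to the essential spectrum of A (the set of λ such that A - λ is not Fredholm). -/

import Mathlib

open Module

/-- A bounded operator between Banach spaces is Fredholm if its range is closed and its
kernel and cokernel are finite-dimensional. -/
def IsFredholm {E F : Type*} [NormedAddCommGroup E] [NormedSpace ℂ E]
    [NormedAddCommGroup F] [NormedSpace ℂ F] (T : E →L[ℂ] F) : Prop :=
  IsClosed (LinearMap.range (T : E →ₗ[ℂ] F) : Set F) ∧ FiniteDimensional ℂ (LinearMap.ker (T : E →ₗ[ℂ] F)) ∧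
    FiniteDimensional ℂ (F ⧸ LinearMap.range (T : E →ₗ[ℂ] F))

/-- The essential spectrum of a bounded operator. -/
def essSpectrum {E : Type*} [NormedAddCommGroup E] [NormedSpace ℂ E]
    (A : E →L[ℂ] E) : Set ℂ :=
  {z | ¬ IsFredholm (A - algebraMap ℂ (E →L[ℂ] E) z)}

/-!
Suppose `T = A - λ` were Fredholm. Write `E = M ⊕ ker T` with `M` closed and `E = range T ⊕ N`
with `N` finite-dimensional. Then `(m, n) ↦ T m + n` is an isomorphism `M × N ≃ E`, hence so is
`Ψ z : (m, n) ↦ (A - z) m + n` for `z` near `λ`, analytically in `z`. Relative to these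
decompositions `(Ψ z)⁻¹ ∘ (A - z)` is block upper triangular with identity block on `M`, so
`A - z` is invertible iff its block `Y z : ker T → N` is, i.e. iff an analytic determinant does
not vanish. By isolated zeros, either `A - z` is singular for all `z` near `λ`, or invertible on a
punctured neighbourhood of `λ`. A boundary point rules out the first, and a non-isolated point of
the spectrum the second.
-/

open Filter Topology Function ContinuousLinearMap

section Analytic

variable {𝕜 : Type*} [NontriviallyNormedField 𝕜] {X E F G : Type*}
  [NormedAddCommGroup X] [NormedSpace 𝕜 X]
  [NormedAddCommGroup E] [NormedSpace 𝕜 E] [NormedAddCommGroup F] [NormedSpace 𝕜 F]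
  [NormedAddCommGroup G] [NormedSpace 𝕜 G]

theorem AnalyticAt.clm_comp {g : X → F →L[𝕜] G} {f : X → E →L[𝕜] F} {x : X}
    (hg : AnalyticAt 𝕜 g x) (hf : AnalyticAt 𝕜 f x) :
    AnalyticAt 𝕜 (fun y => (g y).comp (f y)) x :=
  (compL 𝕜 E F G).analyticAt_bilinear (g x, f x) |>.comp₂ hg hf

theorem analyticAt_map_inverse [CompleteSpace E] (e : E ≃L[𝕜] F) :
    AnalyticAt 𝕜 inverse (e : E →L[𝕜] F) := by
  have h : (inverse : (E →L[𝕜] F) → F →L[𝕜] E) =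
      (fun f => f ∘L (e.symm : F →L[𝕜] E)) ∘ Ring.inverse ∘ fun f => (e.symm : F →L[𝕜] E) ∘L f :=
    funext (inverse_eq_ringInverse e)
  have he : (e.symm : F →L[𝕜] E) ∘L (e : E →L[𝕜] F) = ((1 : (E →L[𝕜] E)ˣ) : E →L[𝕜] E) := by
    ext; simp
  rw [h]
  refine (analyticAt_id.clm_comp analyticAt_const).comp (AnalyticAt.comp ?_
    (analyticAt_const.clm_comp analyticAt_id))
  rw [he]
  exact analyticAt_inverse _

theorem AnalyticAt.matrix_det {ι : Type*} [Fintype ι] [DecidableEq ι] {M : X → Matrix ι ι 𝕜}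
    {x : X} (hM : ∀ i j, AnalyticAt 𝕜 (fun y => M y i j) x) :
    AnalyticAt 𝕜 (fun y => (M y).det) x := by
  simp only [Matrix.det_apply']
  exact Finset.analyticAt_fun_sum _ fun σ _ =>
    analyticAt_const.mul (Finset.analyticAt_fun_prod _ fun i _ => hM (σ i) i)

theorem AnalyticAt.clm_det [CompleteSpace 𝕜] [FiniteDimensional 𝕜 E] {f : X → E →L[𝕜] E} {x : X}
    (hf : AnalyticAt 𝕜 f x) : AnalyticAt 𝕜 (fun y => (f y).det) x := by
  let b := Module.finBasis 𝕜 E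
  simp only [ContinuousLinearMap.det, ← LinearMap.det_toMatrix b]
  refine AnalyticAt.matrix_det fun i j => ?_
  simp only [LinearMap.toMatrix_apply, ContinuousLinearMap.coe_coe]
  exact ((LinearMap.toContinuousLinearMap (b.coord i)).comp (apply 𝕜 E (b j))).analyticAt _
    |>.comp hf

end Analytic

theorem bijective_prod_upperTriangular_iff {M K N : Type*} [AddGroup M] [Nonempty K]
    (X : K → M) (Y : K → N) :
    Bijective (fun p : M × K => (p.1 + X p.2, Y p.2)) ↔ Bijective Y := by
  have shear : Bijective (fun p : M × K => (p.1 + X p.2, p.2)) :=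
    bijective_iff_has_inverse.2 ⟨fun p => (p.1 - X p.2, p.2), fun p => by simp, fun p => by simp⟩
  rw [show (fun p : M × K => (p.1 + X p.2, Y p.2)) =
      Prod.map id Y ∘ fun p : M × K => (p.1 + X p.2, p.2) from rfl,
    Bijective.of_comp_iff _ shear]
  have : Nonempty N := Nonempty.map Y ‹_›
  simp [Bijective, Prod.map_injective, Prod.map_surjective, injective_id, surjective_id]

section LinearAlgebra

variable {R E F N : Type*} [Ring R] [AddCommGroup E] [Module R E] [AddCommGroup F] [Module R F]
  [AddCommGroup N] [Module R N]

open LinearMap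

theorem LinearMap.bijective_iff_bijective_snd_symm {M K : Submodule R E} (hMK : IsCompl M K)
    (L : E →ₗ[R] F) (Ψ : (M × N) ≃ₗ[R] F) (hΨ : ∀ m : M, Ψ (m, 0) = L m) :
    Bijective L ↔ Bijective (fun k : K => (Ψ.symm (L k)).2) := by
  have hG : Ψ.symm ∘ L ∘ Submodule.prodEquivOfIsCompl M K hMK =
      fun p => (p.1 + (Ψ.symm (L p.2)).1, (Ψ.symm (L p.2)).2) := by
    funext p
    rw [Function.comp_apply, Function.comp_apply, Submodule.coe_prodEquivOfIsCompl', map_add,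
      map_add, Ψ.symm_apply_eq.2 (hΨ p.1).symm]
    ext <;> simp
  rw [← bijective_prod_upperTriangular_iff (fun k : K => (Ψ.symm (L k)).1), ← hG,
    EquivLike.comp_bijective, EquivLike.bijective_comp]

theorem LinearMap.bijective_apply_add_of_isCompl (T : E →ₗ[R] F) {M : Submodule R E}
    {N : Submodule R F} (hM : IsCompl M (ker T)) (hN : IsCompl (range T) N) :
    Bijective (fun p : M × N => T p.1 + p.2) := by
  constructor
  · rintro ⟨m, n⟩ ⟨m', n'⟩ h
    have hTmn : T (m - m') = n' - n := by
      simp only at h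
      rw [map_sub, sub_eq_sub_iff_add_eq_add, h, add_comm]
    have hT : T (m - m') = 0 := Submodule.disjoint_def.mp hN.disjoint _ (mem_range_self T _)
      (hTmn ▸ N.sub_mem n'.2 n.2)
    have hm : (m : E) - m' = 0 := Submodule.disjoint_def.mp hM.disjoint _ (M.sub_mem m.2 m'.2) hT
    have hn : (n' : F) - n = 0 := hTmn ▸ hT
    ext <;> simp_all [sub_eq_zero]
  · intro f
    obtain ⟨_, n, ⟨e, rfl⟩, hn, rfl⟩ := Submodule.codisjoint_iff_exists_add_eq.mp hN.codisjoint f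
    obtain ⟨m, k, hm, hk, rfl⟩ := Submodule.codisjoint_iff_exists_add_eq.mp hM.codisjoint e
    exact ⟨(⟨m, hm⟩, ⟨n, hn⟩), by simp [mem_ker.mp hk]⟩

end LinearAlgebra

section FiniteDimensional

variable {𝕜 E F : Type*} [NontriviallyNormedField 𝕜] [CompleteSpace 𝕜]
  [NormedAddCommGroup E] [NormedSpace 𝕜 E] [FiniteDimensional 𝕜 E]
  [NormedAddCommGroup F] [NormedSpace 𝕜 F] [FiniteDimensional 𝕜 F]

theorem AnalyticAt.eventually_not_bijective_or_eventually_bijective {Y : 𝕜 → E →L[𝕜] F} {z₀ : 𝕜}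
    (hY : AnalyticAt 𝕜 Y z₀) :
    (∀ᶠ z in 𝓝 z₀, ¬ Bijective (Y z)) ∨ ∀ᶠ z in 𝓝[≠] z₀, Bijective (Y z) := by
  by_cases h : ∃ z₁, Bijective (Y z₁)
  swap
  · exact .inl (.of_forall fun z hz => h ⟨z, hz⟩)
  obtain ⟨z₁, hz₁⟩ := h
  -- composing with an isomorphism `F ≃ E` turns bijectivity into nonvanishing of a determinant
  let e : F ≃L[𝕜] E :=
    (LinearEquiv.ofBijective (Y z₁ : E →ₗ[𝕜] F) hz₁).symm.toContinuousLinearEquiv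
  have hdet : ∀ z, ((e : F →L[𝕜] E) ∘L Y z).det ≠ 0 ↔ Bijective (Y z) := fun z => by
    rw [← isUnit_iff_ne_zero, ContinuousLinearMap.det, ← LinearMap.isUnit_iff_isUnit_det,
      Module.End.isUnit_iff, ContinuousLinearMap.coe_coe, ContinuousLinearMap.coe_comp,
      ContinuousLinearEquiv.coe_coe, EquivLike.comp_bijective]
  rcases (analyticAt_const.clm_comp hY).clm_det.eventually_eq_zero_or_eventually_ne_zero with h | h
  · exact .inl (h.mono fun z hz => by rwa [← hdet, not_not])
  · exact .inr (h.mono fun z hz => (hdet z).mp hz)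

end FiniteDimensional

section Fredholm

variable {𝕜 E F : Type*} [RCLike 𝕜]
  [NormedAddCommGroup E] [NormedSpace 𝕜 E] [CompleteSpace E]
  [NormedAddCommGroup F] [NormedSpace 𝕜 F] [CompleteSpace F]

open LinearMap

theorem AnalyticAt.exists_ker_to_compl_bijective_iff {T : 𝕜 → E →L[𝕜] F} {z₀ : 𝕜}
    (hT : AnalyticAt 𝕜 T z₀) [FiniteDimensional 𝕜 (ker (T z₀ : E →ₗ[𝕜] F))]
    (N : Submodule 𝕜 F) [FiniteDimensional 𝕜 N] (hN : IsCompl (range (T z₀ : E →ₗ[𝕜] F)) N) :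
    ∃ Y : 𝕜 → ker (T z₀ : E →ₗ[𝕜] F) →L[𝕜] N, AnalyticAt 𝕜 Y z₀ ∧
      ∀ᶠ z in 𝓝 z₀, (Bijective (T z) ↔ Bijective (Y z)) := by
  set K := ker (T z₀ : E →ₗ[𝕜] F)
  obtain ⟨M, hMc, hKM⟩ :=
    (Submodule.ClosedComplemented.of_finiteDimensional K).exists_isClosed_isCompl
  have : CompleteSpace M := hMc.completeSpace_coe
  have : CompleteSpace N := FiniteDimensional.complete 𝕜 N
  let Ψ : 𝕜 → M × N →L[𝕜] F := fun z =>
    T z ∘L M.subtypeL ∘L fst 𝕜 M N + N.subtypeL ∘L snd 𝕜 M N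
  have hΨ : AnalyticAt 𝕜 Ψ z₀ := (hT.clm_comp analyticAt_const).add analyticAt_const
  have hΨ₀ : Bijective (Ψ z₀) := (T z₀ : E →ₗ[𝕜] F).bijective_apply_add_of_isCompl hKM.symm hN
  let e₀ : (M × N) ≃L[𝕜] F := ContinuousLinearEquiv.ofBijective (Ψ z₀)
    (LinearMap.ker_eq_bot.mpr hΨ₀.1) (LinearMap.range_eq_top.mpr hΨ₀.2)
  have hinv : ∀ᶠ z in 𝓝 z₀, (Ψ z).IsInvertible :=
    hΨ.continuousAt.eventually_mem (ContinuousLinearEquiv.isOpen.mem_nhds ⟨e₀, rfl⟩)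
  refine ⟨fun z => snd 𝕜 M N ∘L (Ψ z).inverse ∘L T z ∘L K.subtypeL, ?_, ?_⟩
  · exact analyticAt_const.clm_comp
      (((analyticAt_map_inverse e₀).comp (f := Ψ) hΨ).clm_comp (hT.clm_comp analyticAt_const))
  · filter_upwards [hinv] with z ⟨A, hA⟩
    rw [← hA, ContinuousLinearMap.inverse_equiv]
    exact (T z : E →ₗ[𝕜] F).bijective_iff_bijective_snd_symm hKM.symm A.toLinearEquiv
      fun m => by
        change (A : M × N →L[𝕜] F) (m, 0) = _
        simp [hA, Ψ]

theorem AnalyticAt.eventually_not_bijective_or_eventually_bijective_of_ker_coker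
    {T : 𝕜 → E →L[𝕜] F} {z₀ : 𝕜} (hT : AnalyticAt 𝕜 T z₀)
    [FiniteDimensional 𝕜 (ker (T z₀ : E →ₗ[𝕜] F))]
    [FiniteDimensional 𝕜 (F ⧸ range (T z₀ : E →ₗ[𝕜] F))] :
    (∀ᶠ z in 𝓝 z₀, ¬ Bijective (T z)) ∨ ∀ᶠ z in 𝓝[≠] z₀, Bijective (T z) := by
  obtain ⟨N, hN⟩ := Submodule.exists_isCompl (range (T z₀ : E →ₗ[𝕜] F))
  have := (Submodule.quotientEquivOfIsCompl _ N hN).finiteDimensional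
  obtain ⟨Y, hY, hTY⟩ := hT.exists_ker_to_compl_bijective_iff N hN
  refine hY.eventually_not_bijective_or_eventually_bijective.imp (fun h => ?_) (fun h => ?_)
  · filter_upwards [h, hTY] with z hz hzY
    rwa [hzY]
  · filter_upwards [h, nhdsWithin_le_nhds hTY] with z hz hzY
    rwa [hzY]

end Fredholm

theorem exists_isOpen_inter_eq_singleton_of_eventually_notMem {X : Type*} [TopologicalSpace X]
    {s : Set X} {x : X} (hx : x ∈ s) (h : ∀ᶠ y in 𝓝[≠] x, y ∉ s) :
    ∃ U, IsOpen U ∧ U ∩ s = {x} := by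
  obtain ⟨U, hU, hUo, hxU⟩ := eventually_nhds_iff.mp (eventually_nhdsWithin_iff.mp h)
  refine ⟨U, hUo, Set.eq_singleton_iff_unique_mem.mpr ⟨⟨hxU, hx⟩, fun y ⟨hyU, hys⟩ => ?_⟩⟩
  by_contra hne
  exact hU y hyU hne hys

/-- Every boundary point of the spectrum which is not an isolated point of the spectrum
belongs to the essential spectrum. -/
theorem frontier_spectrum_subset_essSpectrum
    {E : Type*} [NormedAddCommGroup E] [NormedSpace ℂ E] [CompleteSpace E]
    (A : E →L[ℂ] E) :
    frontier (spectrum ℂ A) \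
        {z | z ∈ spectrum ℂ A ∧ ∃ U : Set ℂ, IsOpen U ∧ U ∩ spectrum ℂ A = {z}} ⊆
      essSpectrum A := by
  rintro l ⟨hl, hiso⟩ ⟨-, hker, hcoker⟩
  have hbij : ∀ z, Bijective (A - algebraMap ℂ (E →L[ℂ] E) z) ↔ z ∉ spectrum ℂ A := fun z => by
    rw [spectrum.notMem_iff, ← IsUnit.neg_iff, neg_sub, ContinuousLinearMap.isUnit_iff_bijective]
  have hT : AnalyticAt ℂ (fun z => A - algebraMap ℂ (E →L[ℂ] E) z) l :=
    analyticAt_const.sub ((Algebra.linearMap ℂ (E →L[ℂ] E)).toContinuousLinearMap.analyticAt l)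
  have hlσ : l ∈ spectrum ℂ A := (spectrum.isClosed A).frontier_subset hl
  rcases hT.eventually_not_bijective_or_eventually_bijective_of_ker_coker with h | h
  · simp only [hbij, not_not] at h
    have hlc : l ∈ closure (spectrum ℂ A)ᶜ := frontier_subset_closure (by rwa [frontier_compl])
    exact mem_closure_iff_frequently.mp hlc (h.mono fun z hz hz' => hz' hz)
  · simp only [hbij] at h
    exact hiso ⟨hlσ, exists_isOpen_inter_eq_singleton_of_eventually_notMem hlσ h⟩
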